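/- Let n ≥ 4 and let λ > 1 be a real number satisfying λ⁴ = (n−1)λ² − (n−3). Let R_n be the rewired star graph on vertex set {0, 1, …, n−1}, in which vertex 0 (the hub) is adjacent to each of the vertices 1, …, n−2, vertex n−2 is additionally adjacent to vertex n−1, and there are no other edges. Then the vector v defined by v_0 = 1, v_i = 1/λ for 1 ≤ i ≤ n−3, v_{n−2} = λ/(λ²−1), and v_{n−1} = 1/(λ²−1) satisfies A v = λ v, where A is the adjacency matrix of R_n. -/

import Mathlib

open Matrix

/-- The rewired star graph on vertex set {0, 1, …, n−1}: vertex 0 (the hub) is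
adjacent to each of the vertices 1, …, n−2, vertex n−2 is additionally adjacent
to vertex n−1, and there are no other edges. -/
def rewiredStar (n : ℕ) : SimpleGraph (Fin n) where
  Adj i j := i ≠ j ∧
    (((i : ℕ) = 0 ∧ (j : ℕ) ≠ n - 1) ∨ ((j : ℕ) = 0 ∧ (i : ℕ) ≠ n - 1) ∨
     ((i : ℕ) = n - 2 ∧ (j : ℕ) = n - 1) ∨ ((j : ℕ) = n - 2 ∧ (i : ℕ) = n - 1))
  symm := ⟨fun _ _ h => ⟨h.1.symm, by tauto⟩⟩
  loopless := ⟨fun _ h => h.1 rfl⟩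

instance rewiredStar.adjDecidable (n : ℕ) : DecidableRel (rewiredStar n).Adj :=
  fun _ _ => inferInstanceAs (Decidable (_ ∧ _))

lemma rewiredStar_adj_iff (n : ℕ) (i j : Fin n) :
    (rewiredStar n).Adj i j ↔ (i ≠ j ∧
    (((i : ℕ) = 0 ∧ (j : ℕ) ≠ n - 1) ∨ ((j : ℕ) = 0 ∧ (i : ℕ) ≠ n - 1) ∨
     ((i : ℕ) = n - 2 ∧ (j : ℕ) = n - 1) ∨ ((j : ℕ) = n - 2 ∧ (i : ℕ) = n - 1))) :=
  Iff.rfl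

/-- For n ≥ 4 and λ > 1 with λ⁴ = (n−1)λ² − (n−3), the vector v with v₀ = 1,
vᵢ = 1/λ for 1 ≤ i ≤ n−3, v_{n−2} = λ/(λ²−1) and v_{n−1} = 1/(λ²−1) is an
eigenvector of the adjacency matrix of the rewired star graph Rₙ with
eigenvalue λ. -/
theorem rewiredStar_eigenvector (n : ℕ) (hn : 4 ≤ n) (lam : ℝ) (hlam : 1 < lam)
    (heq : lam ^ 4 = ((n : ℝ) - 1) * lam ^ 2 - ((n : ℝ) - 3))
    (v : Fin n → ℝ)
    (hv : v = fun i : Fin n =>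
      if (i : ℕ) = 0 then (1 : ℝ)
      else if (i : ℕ) = n - 2 then lam / (lam ^ 2 - 1)
      else if (i : ℕ) = n - 1 then 1 / (lam ^ 2 - 1)
      else 1 / lam) :
    ((rewiredStar n).adjMatrix ℝ) *ᵥ v = lam • v := by
  have hlam0 : lam ≠ 0 := by linarith
  have hl2 : lam ^ 2 - 1 ≠ 0 := by nlinarith
  set z : Fin n := ⟨0, by omega⟩ with hzdef
  set a : Fin n := ⟨n - 2, by omega⟩ with hadef
  set b : Fin n := ⟨n - 1, by omega⟩ with hbdef
  have hza : z ≠ a := by simp [hzdef, hadef, Fin.ext_iff]; omega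
  have hzb : z ≠ b := by simp [hzdef, hbdef, Fin.ext_iff]; omega
  have hab : a ≠ b := by simp [hadef, hbdef, Fin.ext_iff]; omega
  funext i
  rw [Pi.smul_apply, smul_eq_mul,
    SimpleGraph.adjMatrix_mulVec_apply, SimpleGraph.neighborFinset_eq_filter,
    Finset.sum_filter]
  subst hv
  simp only []
  by_cases hi0 : (i : ℕ) = 0
  · -- hub
    have hiz : i = z := Fin.ext (by simpa using hi0)
    have hkey : ∀ j : Fin n, (if (rewiredStar n).Adj i j then
        (if (j : ℕ) = 0 then (1 : ℝ)
        else if (j : ℕ) = n - 2 then lam / (lam ^ 2 - 1)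
        else if (j : ℕ) = n - 1 then 1 / (lam ^ 2 - 1)
        else 1 / lam) else 0)
        = (if j = z then 0 else if j = a then lam / (lam ^ 2 - 1)
           else if j = b then 0 else 1 / lam) := by
      intro j
      by_cases h0 : (j : ℕ) = 0
      · have hjz : j = z := Fin.ext (by simpa using h0)
        have : ¬ (rewiredStar n).Adj i j := by
          simp only [rewiredStar_adj_iff, ne_eq, Fin.ext_iff]
          omega
        rw [if_neg this, if_pos hjz]
      · have hjz : j ≠ z := by intro h; exact h0 (by simp [h, hzdef])
        have hne : i ≠ j := by intro h; exact h0 (by omega)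
        by_cases hjn1 : (j : ℕ) = n - 1
        · have hjb : j = b := Fin.ext (by simpa using hjn1)
          have hjn2 : ¬ (j : ℕ) = n - 2 := by omega
          have hja : j ≠ a := by
            intro h; exact hjn2 (by simp [h, hadef])
          have : ¬ (rewiredStar n).Adj i j := by
            simp only [rewiredStar_adj_iff, ne_eq, Fin.ext_iff]
            omega
          rw [if_neg this, if_neg hjz, if_neg hja, if_pos hjb]
        · have hadj : (rewiredStar n).Adj i j := by
            simp only [rewiredStar_adj_iff, ne_eq, Fin.ext_iff]
            omega
          rw [if_pos hadj, if_neg h0]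
          by_cases hjn2 : (j : ℕ) = n - 2
          · have hja : j = a := Fin.ext (by simpa using hjn2)
            rw [if_pos hjn2, if_neg hjz, if_pos hja]
          · have hja : j ≠ a := by intro h; exact hjn2 (by simp [h, hadef])
            have hjb : j ≠ b := by intro h; exact hjn1 (by simp [h, hbdef])
            rw [if_neg hjn2, if_neg hjn1, if_neg hjz, if_neg hja, if_neg hjb]
    rw [Finset.sum_congr rfl (fun j _ => hkey j)]
    have hs : ({z, a, b} : Finset (Fin n)) ⊆ Finset.univ := Finset.subset_univ _
    rw [← Finset.sum_sdiff hs]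
    have h1 : ∑ j ∈ ({z, a, b} : Finset (Fin n)),
        (if j = z then 0 else if j = a then lam / (lam ^ 2 - 1)
           else if j = b then 0 else 1 / lam) = lam / (lam ^ 2 - 1) := by
      rw [Finset.sum_insert (by simp [hza, hzb]), Finset.sum_insert (by simp [hab]),
        Finset.sum_singleton]
      rw [if_pos rfl, if_neg hza.symm, if_pos rfl, if_neg hzb.symm, if_neg hab.symm,
        if_pos rfl]
      ring
    have h2 : ∑ j ∈ (Finset.univ \ ({z, a, b} : Finset (Fin n))),
        (if j = z then 0 else if j = a then lam / (lam ^ 2 - 1)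
           else if j = b then 0 else 1 / lam) = ((n : ℝ) - 3) * (1 / lam) := by
      rw [Finset.sum_congr rfl (fun j hj => ?_), Finset.sum_const, nsmul_eq_mul]
      · congr 1
        rw [Finset.card_sdiff_of_subset hs, Finset.card_univ]
        have : ({z, a, b} : Finset (Fin n)).card = 3 := by
          rw [Finset.card_insert_of_notMem (by simp [hza, hzb]),
            Finset.card_insert_of_notMem (by simp [hab]), Finset.card_singleton]
        rw [this]
        simp
        push_cast [Nat.cast_sub (by omega : 3 ≤ n)]
        ring
      · simp only [Finset.mem_sdiff, Finset.mem_insert, Finset.mem_singleton] at hj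
        push_neg at hj
        rw [if_neg hj.2.1, if_neg hj.2.2.1, if_neg hj.2.2.2]
    rw [h1, h2, if_pos hi0]
    field_simp
    nlinarith [heq]
  · by_cases hin2 : (i : ℕ) = n - 2
    · -- i = a : neighbors z and b
      have hkey : ∀ j : Fin n, (if (rewiredStar n).Adj i j then
          (if (j : ℕ) = 0 then (1 : ℝ)
          else if (j : ℕ) = n - 2 then lam / (lam ^ 2 - 1)
          else if (j : ℕ) = n - 1 then 1 / (lam ^ 2 - 1)
          else 1 / lam) else 0)
          = (if j = z then 1 else if j = b then 1 / (lam ^ 2 - 1) else 0) := by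
        intro j
        by_cases h0 : (j : ℕ) = 0
        · have hjz : j = z := Fin.ext (by simpa using h0)
          have hadj : (rewiredStar n).Adj i j := by
            simp only [rewiredStar_adj_iff, ne_eq, Fin.ext_iff]
            omega
          rw [if_pos hadj, if_pos h0, if_pos hjz]
        · have hjz : j ≠ z := by intro h; exact h0 (by simp [h, hzdef])
          by_cases hjn1 : (j : ℕ) = n - 1
          · have hjb : j = b := Fin.ext (by simpa using hjn1)
            have hadj : (rewiredStar n).Adj i j := by
              simp only [rewiredStar_adj_iff, ne_eq, Fin.ext_iff]
              omega
            rw [if_pos hadj, if_neg h0, if_neg (by omega : ¬ (j:ℕ) = n - 2),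
              if_pos hjn1, if_neg hjz, if_pos hjb]
          · have hjb : j ≠ b := by intro h; exact hjn1 (by simp [h, hbdef])
            have : ¬ (rewiredStar n).Adj i j := by
              simp only [rewiredStar_adj_iff, ne_eq, Fin.ext_iff]
              omega
            rw [if_neg this, if_neg hjz, if_neg hjb]
      rw [Finset.sum_congr rfl (fun j _ => hkey j)]
      rw [← Finset.sum_subset (Finset.subset_univ ({z, b} : Finset (Fin n)))
        (fun x _ hx => ?_)]
      · rw [Finset.sum_insert (by simp [hzb]), Finset.sum_singleton,
          if_pos rfl, if_neg hzb.symm, if_pos rfl, if_neg hi0, if_pos hin2]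
        field_simp
        ring
      · simp only [Finset.mem_insert, Finset.mem_singleton] at hx
        push_neg at hx
        rw [if_neg hx.1, if_neg hx.2]
    · by_cases hin1 : (i : ℕ) = n - 1
      · -- i = b : neighbor a only
        have hkey : ∀ j : Fin n, (if (rewiredStar n).Adj i j then
            (if (j : ℕ) = 0 then (1 : ℝ)
            else if (j : ℕ) = n - 2 then lam / (lam ^ 2 - 1)
            else if (j : ℕ) = n - 1 then 1 / (lam ^ 2 - 1)
            else 1 / lam) else 0)
            = (if j = a then lam / (lam ^ 2 - 1) else 0) := by
          intro j
          by_cases hjn2 : (j : ℕ) = n - 2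
          · have hja : j = a := Fin.ext (by simpa using hjn2)
            have hadj : (rewiredStar n).Adj i j := by
              simp only [rewiredStar_adj_iff, ne_eq, Fin.ext_iff]
              omega
            rw [if_pos hadj, if_neg (by omega : ¬ (j:ℕ) = 0), if_pos hjn2, if_pos hja]
          · have hja : j ≠ a := by intro h; exact hjn2 (by simp [h, hadef])
            have : ¬ (rewiredStar n).Adj i j := by
              simp only [rewiredStar_adj_iff, ne_eq, Fin.ext_iff]
              omega
            rw [if_neg this, if_neg hja]
        rw [Finset.sum_congr rfl (fun j _ => hkey j)]
        rw [Finset.sum_ite_eq' Finset.univ a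
          (fun _ => lam / (lam ^ 2 - 1)), if_pos (Finset.mem_univ a)]
        rw [if_neg hi0, if_neg hin2, if_pos hin1]
        field_simp
      · -- ordinary leaf: neighbor z only
        have hkey : ∀ j : Fin n, (if (rewiredStar n).Adj i j then
            (if (j : ℕ) = 0 then (1 : ℝ)
            else if (j : ℕ) = n - 2 then lam / (lam ^ 2 - 1)
            else if (j : ℕ) = n - 1 then 1 / (lam ^ 2 - 1)
            else 1 / lam) else 0)
            = (if j = z then 1 else 0) := by
          intro j
          by_cases h0 : (j : ℕ) = 0
          · have hjz : j = z := Fin.ext (by simpa using h0)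
            have hadj : (rewiredStar n).Adj i j := by
              simp only [rewiredStar_adj_iff, ne_eq, Fin.ext_iff]
              omega
            rw [if_pos hadj, if_pos h0, if_pos hjz]
          · have hjz : j ≠ z := by intro h; exact h0 (by simp [h, hzdef])
            have : ¬ (rewiredStar n).Adj i j := by
              simp only [rewiredStar_adj_iff, ne_eq, Fin.ext_iff]
              omega
            rw [if_neg this, if_neg hjz]
        rw [Finset.sum_congr rfl (fun j _ => hkey j)]
        rw [Finset.sum_ite_eq' Finset.univ z (fun _ => (1:ℝ)),
          if_pos (Finset.mem_univ z)]
        rw [if_neg hi0, if_neg hin2, if_neg hin1]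
        field_simp
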